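/- arXiv:math/0701058 — 2 statements merged into one kernel-verified Lean document; each statement's English description precedes it below -/
import Mathlib

section
/- Let U_1, …, U_d be i.i.d. random variables taking value −log λ(i) with probability λ(i)^2/Λ (where λ(i) ≥ 0, Λ = ∑_i λ(i)^2 ∈ (0,∞)). For d ≥ 1 and k ∈ ℕ^d set λ_k = ∏_{l=1}^d λ(k_l). Then for every z ∈ ℝ, ∑_{k ∈ ℕ^d : λ_k < z} λ_k^2 = Λ^d · P(∑_{l=1}^d U_l > −log z), where the sum on the left runs over multi-indices k with all λ(k_l) > 0 (terms with λ_k = 0 contribute 0). -/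
open Real Filter MeasureTheory
open scoped ENNReal

/-- Probabilistic representation of partial sums of tensor-product eigenvalues
(Lemma 3.1 of Lifshits–Tulyakova). -/
theorem stmt5 {Ω : Type*} [MeasurableSpace Ω] (ℙ : Measure Ω) [IsProbabilityMeasure ℙ]
    (lam : ℕ → ℝ) (hnn : ∀ i, 0 ≤ lam i) (Λ : ℝ)
    (hΛ : HasSum (fun i => lam i ^ 2) Λ) (hΛpos : 0 < Λ)
    (d : ℕ) (hd : 1 ≤ d) (U : Fin d → Ω → ℝ)
    (hmeas : ∀ l, Measurable (U l))
    (hlaw : Measure.map (fun ω l => U l ω) ℙ =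
      Measure.pi (fun _ : Fin d =>
        Measure.sum (fun i =>
          ENNReal.ofReal (lam i ^ 2 / Λ) • Measure.dirac (-Real.log (lam i)))))
    (z : ℝ) (hz : 0 < z) :
    ∑' k : {k : Fin d → ℕ // (∏ l, lam (k l)) < z ∧ ∀ l, 0 < lam (k l)},
        ∏ l, lam (k.1 l) ^ 2
      = Λ ^ d * (ℙ {ω | -Real.log z < ∑ l, U l ω}).toReal := by
  classical
  set c : ℕ → ℝ≥0∞ := fun i => ENNReal.ofReal (lam i ^ 2 / Λ) with hc
  set a : ℕ → ℝ := fun i => -Real.log (lam i) with ha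
  set ν : Measure ℕ := Measure.sum (fun i => c i • Measure.dirac i) with hν
  set μ : Measure ℝ := Measure.sum (fun i => c i • Measure.dirac (a i)) with hμ
  have hameas : Measurable a := measurable_of_countable a
  have hsummable : Summable (fun i => lam i ^ 2 / Λ) := hΛ.summable.div_const Λ
  have hcsum : ∑' i, c i = 1 := by
    rw [hc, ← ENNReal.ofReal_tsum_of_nonneg (fun i => by positivity) hsummable,
      (hΛ.div_const Λ).tsum_eq, div_self hΛpos.ne', ENNReal.ofReal_one]
  haveI : IsProbabilityMeasure ν := by
    constructor
    rw [hν, Measure.sum_apply _ MeasurableSet.univ]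
    simpa using hcsum
  have hμmap : μ = ν.map a := by
    rw [hν, Measure.map_sum hameas.aemeasurable]
    simp_rw [Measure.map_smul, Measure.map_dirac' hameas]
    exact hμ
  haveI : IsProbabilityMeasure μ := by
    rw [hμmap]; exact Measure.isProbabilityMeasure_map hameas.aemeasurable
  set F : (Fin d → ℕ) → (Fin d → ℝ) := fun k l => a (k l) with hF
  have hFmeas : Measurable F := measurable_of_countable F
  -- the push-forward of the product measure on ℕ^d
  have hpi : Measure.pi (fun _ : Fin d => μ) = (Measure.pi fun _ : Fin d => ν).map F := by
    refine Measure.pi_eq fun s hs => ?_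
    rw [Measure.map_apply hFmeas (MeasurableSet.univ_pi hs)]
    have hpre : F ⁻¹' (Set.pi Set.univ s) = Set.pi Set.univ fun l => a ⁻¹' (s l) := by
      ext k; simp [hF, Set.mem_pi]
    rw [hpre, Measure.pi_pi]
    refine Finset.prod_congr rfl fun l _ => ?_
    rw [hμmap, Measure.map_apply hameas (hs l)]
  -- the event
  set S : Set (Fin d → ℝ) := {f | -Real.log z < ∑ l, f l} with hS
  have hSmeas : MeasurableSet S :=
    measurableSet_lt measurable_const
      (Finset.measurable_sum _ fun l _ => measurable_pi_apply l)
  have hmv : Measurable (fun ω l => U l ω) := measurable_pi_lambda _ hmeas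
  have h1 : ℙ {ω | -Real.log z < ∑ l, U l ω}
      = (Measure.pi fun _ : Fin d => μ) S := by
    rw [← hlaw, Measure.map_apply hmv hSmeas]
    rfl
  set T : Set (Fin d → ℕ) := F ⁻¹' S with hT
  have hTmeas : MeasurableSet T := hFmeas hSmeas
  set g : (Fin d → ℕ) → ℝ≥0∞ := fun k => ∏ l, c (k l) with hg
  have hsingle : ∀ k : Fin d → ℕ, (Measure.pi fun _ : Fin d => ν) {k} = g k := by
    intro k
    rw [← Set.univ_pi_singleton, Measure.pi_pi]
    refine Finset.prod_congr rfl fun l _ => ?_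
    rw [hν, Measure.sum_apply _ (measurableSet_singleton _)]
    have : ∀ j, (c j • Measure.dirac j) {k l} = if j = k l then c j else 0 := by
      intro j
      by_cases h : j = k l <;>
        simp [Measure.smul_apply, Measure.dirac_apply, Set.indicator_apply, h]
    simp_rw [this]
    exact tsum_eq_single (k l) (fun j hj => if_neg hj) |>.trans (if_pos rfl)
  -- the "good" set
  set B : Set (Fin d → ℕ) := {k | (∏ l, lam (k l)) < z ∧ ∀ l, 0 < lam (k l)} with hB
  have hBT : ∀ k ∈ B, k ∈ T := by
    rintro k ⟨h1k, h2k⟩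
    have hlog : ∑ l, a (k l) = -Real.log (∏ l, lam (k l)) := by
      rw [Real.log_prod (fun l _ => (h2k l).ne')]
      simp [ha]
    have hprodpos : 0 < ∏ l, lam (k l) := Finset.prod_pos fun l _ => h2k l
    have : Real.log (∏ l, lam (k l)) < Real.log z :=
      (Real.log_lt_log_iff hprodpos hz).mpr h1k
    show -Real.log z < ∑ l, F k l
    simpa [hF, hlog] using neg_lt_neg this
  have hzero : ∀ k, k ∈ T → k ∉ B → g k = 0 := by
    intro k hkT hkB
    by_cases hpos : ∀ l, 0 < lam (k l)
    · exfalso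
      apply hkB
      refine ⟨?_, hpos⟩
      have hprodpos : 0 < ∏ l, lam (k l) := Finset.prod_pos fun l _ => hpos l
      have hlog : ∑ l, a (k l) = -Real.log (∏ l, lam (k l)) := by
        rw [Real.log_prod (fun l _ => (hpos l).ne')]
        simp [ha]
      have hkT' : -Real.log z < -Real.log (∏ l, lam (k l)) := by
        have := hkT
        simp only [hT, Set.mem_preimage, hS, Set.mem_setOf_eq] at this
        simpa [hF, hlog] using this
      exact (Real.log_lt_log_iff hprodpos hz).mp (by linarith)
    · push_neg at hpos
      obtain ⟨l, hl⟩ := hpos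
      have hlz : lam (k l) = 0 := le_antisymm hl (hnn (k l))
      refine Finset.prod_eq_zero (Finset.mem_univ l) ?_
      simp [hc, hlz]
  have hind : ∀ k, T.indicator g k = B.indicator g k := by
    intro k
    by_cases hkB : k ∈ B
    · rw [Set.indicator_of_mem hkB, Set.indicator_of_mem (hBT k hkB)]
    · rw [Set.indicator_of_notMem hkB]
      by_cases hkT : k ∈ T
      · rw [Set.indicator_of_mem hkT]; exact hzero k hkT hkB
      · rw [Set.indicator_of_notMem hkT]
  have hgval : ∀ k : Fin d → ℕ, g k = ENNReal.ofReal ((∏ l, lam (k l) ^ 2) / Λ ^ d) := by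
    intro k
    calc ∏ l, c (k l) = ∏ l, ENNReal.ofReal (lam (k l) ^ 2 / Λ) := rfl
      _ = ENNReal.ofReal (∏ l, (lam (k l) ^ 2 / Λ)) :=
          (ENNReal.ofReal_prod_of_nonneg fun i _ => by positivity).symm
      _ = ENNReal.ofReal ((∏ l, lam (k l) ^ 2) / Λ ^ d) := by
          rw [Finset.prod_div_distrib, Finset.prod_const, Finset.card_univ, Fintype.card_fin]
  have key : ℙ {ω | -Real.log z < ∑ l, U l ω}
      = ∑' k : {k : Fin d → ℕ // (∏ l, lam (k l)) < z ∧ ∀ l, 0 < lam (k l)},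
          ENNReal.ofReal ((∏ l, lam (k.1 l) ^ 2) / Λ ^ d) := by
    rw [h1, hpi, Measure.map_apply hFmeas hSmeas, ← hT,
      ← Measure.tsum_indicator_apply_singleton _ _ hTmeas]
    simp_rw [hsingle, hind]
    rw [← tsum_subtype B g]
    exact tsum_congr fun k => hgval k.1
  rw [key, ENNReal.tsum_toReal_eq (fun k => ENNReal.ofReal_ne_top), ← tsum_mul_left]
  refine tsum_congr fun k => ?_
  rw [ENNReal.toReal_ofReal (by positivity)]
  field_simp
end

section
/- With the notation of the tensor-product eigenvalue setting (λ_k = ∏_{l=1}^d λ(k_l), Λ = ∑_i λ(i)^2 ∈ (0,∞), U_1,…,U_d i.i.d. with P(U_l = −log λ(i)) = λ(i)^2/Λ), for every ζ > 0 the cardinality of the set A = {k ∈ ℕ^d : λ_k ≥ ζ} satisfies card(A) = Λ^d · E[ exp(2 ∑_{l=1}^d U_l) · 1{∑_{l=1}^d U_l ≤ −log ζ} ], provided this expectation is finite. -/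
open Real Filter MeasureTheory

lemma tsum_pi_prod : ∀ (n : ℕ) (f : Fin n → ℕ → ENNReal),
    ∑' k : Fin n → ℕ, ∏ i, f i (k i) = ∏ i, ∑' m, f i m := by
  intro n
  induction n with
  | zero =>
    intro f
    simp only [Finset.univ_eq_empty, Finset.prod_empty]
    exact tsum_eq_single default fun b hb => (hb (Subsingleton.elim b default)).elim
  | succ n ih =>
    intro f
    rw [← (Fin.consEquiv (fun _ : Fin (n+1) => ℕ)).tsum_eq]
    have : ∀ p : ℕ × (Fin n → ℕ),
        (∏ i, f i ((Fin.consEquiv (fun _ : Fin (n+1) => ℕ)) p i)) =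
        f 0 p.1 * ∏ i, f i.succ (p.2 i) := by
      intro p
      rw [Fin.prod_univ_succ]
      simp [Fin.consEquiv]
    simp_rw [this]
    rw [ENNReal.tsum_prod']
    simp_rw [ENNReal.tsum_mul_left, ENNReal.tsum_mul_right]
    rw [ih (fun i => f i.succ), Fin.prod_univ_succ]

lemma pi_sum_dirac (lam : ℕ → ℝ) (Λ : ℝ)
    (hΛ : HasSum (fun i => lam i ^ 2) Λ) (hΛpos : 0 < Λ) (d : ℕ) :
    Measure.pi (fun _ : Fin d =>
        Measure.sum (fun i =>
          ENNReal.ofReal (lam i ^ 2 / Λ) • Measure.dirac (-Real.log (lam i)))) =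
    Measure.sum (fun k : Fin d → ℕ =>
      (∏ l, ENNReal.ofReal (lam (k l) ^ 2 / Λ)) •
        Measure.dirac (fun l => -Real.log (lam (k l)))) := by
  set w : ℕ → ENNReal := fun i => ENNReal.ofReal (lam i ^ 2 / Λ) with hwdef
  set μ : Measure ℝ := Measure.sum (fun i => w i • Measure.dirac (-Real.log (lam i))) with hμdef
  have hw : ∑' i, w i = 1 := by
    have h1 : HasSum (fun i => lam i ^ 2 / Λ) 1 := by
      simpa [div_self hΛpos.ne'] using hΛ.div_const Λ
    rw [hwdef, ← ENNReal.ofReal_one, ← h1.tsum_eq]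
    exact (ENNReal.ofReal_tsum_of_nonneg (fun i => by positivity) h1.summable).symm
  have hμprob : IsProbabilityMeasure μ := ⟨by
    rw [hμdef, Measure.sum_apply _ MeasurableSet.univ]
    simpa using hw⟩
  haveI := hμprob
  refine Measure.pi_eq fun s hs => ?_
  rw [Measure.sum_apply _ (MeasurableSet.univ_pi hs)]
  have hterm : ∀ k : Fin d → ℕ,
      ((∏ l, w (k l)) • Measure.dirac (fun l => -Real.log (lam (k l))))
        (Set.pi Set.univ s)
      = ∏ l, (w (k l) * (s l).indicator 1 (-Real.log (lam (k l)))) := by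
    intro k
    rw [Measure.smul_apply, smul_eq_mul,
      Measure.dirac_apply' _ (MeasurableSet.univ_pi hs)]
    by_cases hk : (fun l => -Real.log (lam (k l))) ∈ Set.pi Set.univ s
    · rw [Set.indicator_of_mem hk, Finset.prod_mul_distrib]
      have : ∀ l, (s l).indicator (1 : ℝ → ENNReal) (-Real.log (lam (k l))) = 1 := by
        intro l
        rw [Set.indicator_of_mem (hk l (Set.mem_univ l))]
        rfl
      simp [this]
    · rw [Set.indicator_of_notMem hk, mul_zero]
      obtain ⟨l₀, -, hl₀⟩ : ∃ l, l ∈ Set.univ ∧ -Real.log (lam (k l)) ∉ s l := by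
        simpa [Set.mem_pi] using hk
      exact (Finset.prod_eq_zero (Finset.mem_univ l₀)
        (by simp [Set.indicator_of_notMem hl₀])).symm
  simp_rw [hwdef] at hterm ⊢; simp_rw [hterm]
  rw [tsum_pi_prod d (fun l i => w i * (s l).indicator 1 (-Real.log (lam i)))]
  refine Finset.prod_congr rfl fun l _ => ?_
  rw [hμdef, Measure.sum_apply _ (hs l)]
  simp_rw [Measure.smul_apply, smul_eq_mul, Measure.dirac_apply' _ (hs l)]

/-- Counting multi-indices with large tensor-product eigenvalues:
card {k : λ_k ≥ ζ} = Λ^d · E[exp(2 ∑ U_l) 1{∑ U_l ≤ -log ζ}]. -/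
theorem stmt6 {Ω : Type*} [MeasurableSpace Ω] (ℙ : Measure Ω) [IsProbabilityMeasure ℙ]
    (lam : ℕ → ℝ) (hnn : ∀ i, 0 ≤ lam i) (Λ : ℝ)
    (hΛ : HasSum (fun i => lam i ^ 2) Λ) (hΛpos : 0 < Λ)
    (d : ℕ) (hd : 1 ≤ d) (U : Fin d → Ω → ℝ)
    (hmeas : ∀ l, Measurable (U l))
    (hlaw : Measure.map (fun ω l => U l ω) ℙ =
      Measure.pi (fun _ : Fin d =>
        Measure.sum (fun i =>
          ENNReal.ofReal (lam i ^ 2 / Λ) • Measure.dirac (-Real.log (lam i)))))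
    (ζ : ℝ) (hζ : 0 < ζ)
    (hint : IntegrableOn (fun ω => Real.exp (2 * ∑ l, U l ω))
      {ω | (∑ l, U l ω) ≤ -Real.log ζ} ℙ) :
    (Nat.card {k : Fin d → ℕ // ζ ≤ ∏ l, lam (k l)} : ℝ)
      = Λ ^ d * ∫ ω in {ω | (∑ l, U l ω) ≤ -Real.log ζ},
          Real.exp (2 * ∑ l, U l ω) ∂ℙ := by
  classical
  set A : Set (Fin d → ℕ) := {k | ζ ≤ ∏ l, lam (k l)} with hAdef
  set T : Set (Fin d → ℝ) := {x | ∑ l, x l ≤ -Real.log ζ} with hTdef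
  have hT : MeasurableSet T :=
    measurableSet_le (Finset.measurable_sum _ fun l _ => measurable_pi_apply l)
      measurable_const
  have hV : Measurable (fun ω l => U l ω) := measurable_pi_lambda _ hmeas
  have hg : Measurable (fun x : Fin d → ℝ => Real.exp (2 * ∑ l, x l)) :=
    Real.measurable_exp.comp
      ((Finset.measurable_sum _ fun l _ => measurable_pi_apply l).const_mul 2)
  have h1 : ∫ x in T, Real.exp (2 * ∑ l, x l) ∂(Measure.map (fun ω l => U l ω) ℙ)
      = ∫ ω in {ω | (∑ l, U l ω) ≤ -Real.log ζ}, Real.exp (2 * ∑ l, U l ω) ∂ℙ :=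
    setIntegral_map hT hg.aestronglyMeasurable hV.aemeasurable
  have h2 : ∫⁻ x in T, ENNReal.ofReal (Real.exp (2 * ∑ l, x l))
        ∂(Measure.map (fun ω l => U l ω) ℙ)
      = ∫⁻ ω in {ω | (∑ l, U l ω) ≤ -Real.log ζ},
          ENNReal.ofReal (Real.exp (2 * ∑ l, U l ω)) ∂ℙ :=
    setLIntegral_map hT hg.ennreal_ofReal hV
  -- pointwise identity
  have hpt : ∀ k : Fin d → ℕ,
      (∏ l, ENNReal.ofReal (lam (k l) ^ 2 / Λ)) * T.indicator
        (fun x => ENNReal.ofReal (Real.exp (2 * ∑ l, x l)))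
        (fun l => -Real.log (lam (k l)))
      = A.indicator (fun _ => ENNReal.ofReal ((1 / Λ) ^ d)) k := by
    intro k
    by_cases hkA : k ∈ A
    · have hkA' : ζ ≤ ∏ l, lam (k l) := hkA
      have hprodpos : 0 < ∏ l, lam (k l) := lt_of_lt_of_le hζ hkA'
      have hpos : ∀ l, 0 < lam (k l) := by
        intro l
        rcases (hnn (k l)).lt_or_eq with h | h
        · exact h
        · rw [Finset.prod_eq_zero (Finset.mem_univ l) h.symm] at hprodpos
          exact absurd hprodpos (lt_irrefl 0)
      have hsum : ∑ l, -Real.log (lam (k l)) = -Real.log (∏ l, lam (k l)) := by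
        rw [Real.log_prod fun l _ => (hpos l).ne']
        simp
      have hmemT : (fun l => -Real.log (lam (k l))) ∈ T := by
        show ∑ l, -Real.log (lam (k l)) ≤ -Real.log ζ
        rw [hsum]
        exact neg_le_neg ((Real.log_le_log_iff hζ hprodpos).mpr hkA')
      rw [Set.indicator_of_mem hmemT, Set.indicator_of_mem hkA]
      have hfac : ∀ l, Real.exp (2 * -Real.log (lam (k l))) = (lam (k l) ^ 2)⁻¹ := by
        intro l
        have ht := hpos l
        rw [show (2 : ℝ) * -Real.log (lam (k l)) = -(Real.log (lam (k l)) * 2) by ring]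
        rw [Real.exp_neg, ← Real.rpow_def_of_pos ht,
          show ((2 : ℝ)) = ((2 : ℕ) : ℝ) by norm_num, Real.rpow_natCast]
      rw [← ENNReal.ofReal_prod_of_nonneg fun l _ => by positivity]
      rw [← ENNReal.ofReal_mul (by positivity)]
      congr 1
      rw [show (2 : ℝ) * ∑ l, -Real.log (lam (k l))
            = ∑ l, 2 * -Real.log (lam (k l)) from Finset.mul_sum _ _ _,
        Real.exp_sum, ← Finset.prod_mul_distrib]
      have : ∀ l ∈ Finset.univ,
          lam (k l) ^ 2 / Λ * Real.exp (2 * -Real.log (lam (k l))) = 1 / Λ := by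
        intro l _
        rw [hfac l, div_mul_eq_mul_div,
          mul_inv_cancel₀ ((pow_pos (hpos l) 2).ne')]
      rw [Finset.prod_congr rfl this, Finset.prod_const, Finset.card_univ,
        Fintype.card_fin]
    · rw [Set.indicator_of_notMem hkA]
      by_cases hz : ∀ l, 0 < lam (k l)
      · have hprodpos : 0 < ∏ l, lam (k l) := Finset.prod_pos fun l _ => hz l
        have hsum : ∑ l, -Real.log (lam (k l)) = -Real.log (∏ l, lam (k l)) := by
          rw [Real.log_prod fun l _ => (hz l).ne']
          simp
        have hnotT : (fun l => -Real.log (lam (k l))) ∉ T := by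
          intro hmem
          apply hkA
          have hmem' : ∑ l, -Real.log (lam (k l)) ≤ -Real.log ζ := hmem
          rw [hsum, neg_le_neg_iff] at hmem'
          exact (Real.log_le_log_iff hζ hprodpos).mp hmem'
        rw [Set.indicator_of_notMem hnotT, mul_zero]
      · push_neg at hz
        obtain ⟨l₀, hl₀⟩ := hz
        have hzero : lam (k l₀) = 0 := le_antisymm hl₀ (hnn (k l₀))
        have hw0 : ENNReal.ofReal (lam (k l₀) ^ 2 / Λ) = 0 := by simp [hzero]
        rw [Finset.prod_eq_zero (Finset.mem_univ l₀) hw0, zero_mul]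
  -- compute the lintegral
  have hmap : Measure.map (fun ω l => U l ω) ℙ
      = Measure.sum (fun k : Fin d → ℕ =>
          (∏ l, ENNReal.ofReal (lam (k l) ^ 2 / Λ)) •
            Measure.dirac (fun l => -Real.log (lam (k l)))) := by
    rw [hlaw]; exact pi_sum_dirac lam Λ hΛ hΛpos d
  have hL : ∫⁻ x in T, ENNReal.ofReal (Real.exp (2 * ∑ l, x l))
        ∂(Measure.map (fun ω l => U l ω) ℙ)
      = A.encard * ENNReal.ofReal ((1 / Λ) ^ d) := by
    rw [← lintegral_indicator hT _, hmap, lintegral_sum_measure]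
    simp_rw [lintegral_smul_measure, smul_eq_mul,
      lintegral_dirac' _ (hg.ennreal_ofReal.indicator hT)]
    rw [tsum_congr hpt, ← tsum_subtype A (fun _ => ENNReal.ofReal ((1 / Λ) ^ d)),
      ENNReal.tsum_set_const]
  have hc0 : ENNReal.ofReal ((1 / Λ) ^ d) ≠ 0 := by
    simp only [ne_eq, ENNReal.ofReal_eq_zero, not_le]
    positivity
  have hfin : A.Finite := by
    rw [← Set.encard_ne_top_iff]
    intro htop
    have hlt : A.encard * ENNReal.ofReal ((1 / Λ) ^ d) < ⊤ := by
      rw [← hL, h2]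
      refine lt_of_le_of_lt (lintegral_mono fun ω => ?_) hint.2
      rw [← ofReal_norm_eq_enorm, Real.norm_eq_abs,
        abs_of_pos (Real.exp_pos _)]
    rw [htop, ENat.toENNReal_top, ENNReal.top_mul hc0] at hlt
    exact lt_irrefl _ hlt
  have hcard : A.encard = ((Nat.card A : ℕ) : ℕ∞) := by
    rw [Nat.card_coe_set_eq, Set.ncard_def]
    exact (ENat.coe_toNat (by rwa [Set.encard_ne_top_iff])).symm
  have hInt : ∫ ω in {ω | (∑ l, U l ω) ≤ -Real.log ζ}, Real.exp (2 * ∑ l, U l ω) ∂ℙ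
      = (Nat.card A : ℝ) * (1 / Λ) ^ d := by
    rw [← h1, integral_eq_lintegral_of_nonneg_ae
        (Eventually.of_forall fun x => (Real.exp_pos _).le)
        hg.aestronglyMeasurable.restrict,
      hL, hcard]
    rw [ENNReal.toReal_mul, ENNReal.toReal_ofReal (by positivity : (0:ℝ) ≤ (1/Λ)^d)]
    simp
  have hcard2 : (Nat.card {k : Fin d → ℕ // ζ ≤ ∏ l, lam (k l)} : ℕ) = Nat.card A := rfl
  rw [hcard2, hInt]
  have hΛd : (Λ : ℝ) ^ d ≠ 0 := pow_ne_zero d hΛpos.ne'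
  field_simp
  rw [one_div, inv_pow, mul_assoc, mul_inv_cancel₀ hΛd, mul_one]
end
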